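/- Let G be a finite group and H₁ ≤ H ≤ G subgroups with H₁ a proper subgroup of H. Then the kernel of the G-action on the induced module Ind_H^G ω(H/H₁)_ℚ is a normal subgroup of G contained in H₁. In particular, if H₁ contains no nontrivial normal subgroup of G, then G acts faithfully on Ind_H^G ω(H/H₁)_ℚ. -/

import Mathlib

/-- The function model of the induced module `Ind_H^G ω(H/H₁)_ℚ = ℚ[G] ⊗_{ℚ[H]} ω(H/H₁)_ℚ`
(for a finite group these are canonically isomorphic): `f : G → ℚ[H/H₁]` belongs to the
induced module iff every value `f x` lies in `ω(H/H₁)_ℚ` (the kernel of the augmentation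
`ℚ[H/H₁] → ℚ`) and `f (x·h) = h⁻¹ • (f x)` for all `x ∈ G`, `h ∈ H`.  The `G`-action on
this module is `(g • f) x = f (g⁻¹ x)`. -/
def MemInducedOmega {G : Type*} [Group G] (H H₁ : Subgroup G)
    (f : G → ((H ⧸ H₁.subgroupOf H) →₀ ℚ)) : Prop :=
  (∀ x : G,
      Finsupp.linearCombination ℚ (fun _ : H ⧸ H₁.subgroupOf H => (1 : ℚ)) (f x) = 0)
  ∧ ∀ (x : G) (h : H), f (x * h) =
      (Representation.ofMulAction ℚ H (H ⧸ H₁.subgroupOf H) h⁻¹ (MonoidAlgebra.ofCoeff (f x))).coeff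

/-!
The elements of `G` acting trivially, by left translation, on a set of functions `G → M` that
is closed under left translation form a normal subgroup.
For `a ∈ H \ H₁` the vector `v = [H₁] - [aH₁]` lies in `ω(H/H₁)_ℚ`. An `x` in the kernel fixes
`1 ⊗ v`, which forces `x ∈ H` and `x • v = v`; comparing the coefficients at `H₁`, and using
`1 ≠ -1` in `ℚ`, gives `xH₁ = H₁`, i.e. `x ∈ H₁`. Finally, a normal subgroup contained in `H₁`
lies in its normal core.
-/

section TranslationKernel

variable {G M : Type*} [Group G]

def translationKernel (P : Set (G → M)) : Subgroup G where
  carrier := {x | ∀ f ∈ P, (fun y => f (x⁻¹ * y)) = f}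
  one_mem' _ _ := by simp
  mul_mem' {x z} hx hz f hf := funext fun y => by
    simpa [mul_assoc] using (congr_fun (hz f hf) (x⁻¹ * y)).trans (congr_fun (hx f hf) y)
  inv_mem' {x} hx f hf := funext fun y => by
    simpa [mul_assoc] using (congr_fun (hx f hf) (x * y)).symm

theorem translationKernel_normal {P : Set (G → M)}
    (hP : ∀ g, ∀ f ∈ P, (fun y => f (g * y)) ∈ P) : (translationKernel P).Normal where
  conj_mem x hx g f hf := funext fun y => by
    simpa [mul_assoc] using congr_fun (hx _ (hP g f hf)) (g⁻¹ * y)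

theorem apply_inv_eq_apply_one_of_mem_translationKernel {P : Set (G → M)} {x : G}
    (hx : x ∈ translationKernel P) {f : G → M} (hf : f ∈ P) : f x⁻¹ = f 1 := by
  simpa using congr_fun (hx f hf) 1

end TranslationKernel

theorem Finsupp.eq_of_single_sub_single_eq {α R : Type*} [Ring R] [CharZero R] {p p' q q' : α}
    (hq : q ≠ q') (h : single p (1 : R) - single p' 1 = single q 1 - single q' 1) : p = q := by
  classical
  by_contra hpq
  have := DFunLike.congr_fun h q
  simp only [Finsupp.sub_apply, Finsupp.single_apply, if_neg hpq, if_neg hq.symm, if_true] at this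
  split_ifs at this <;> norm_num at this

namespace MemInducedOmega

variable {G : Type*} [Group G] {H H₁ : Subgroup G}

theorem comp_mul_left {f : G → ((H ⧸ H₁.subgroupOf H) →₀ ℚ)} (hf : MemInducedOmega H H₁ f)
    (g : G) : MemInducedOmega H H₁ (fun y => f (g * y)) :=
  ⟨fun y => hf.1 (g * y), fun y h => by simpa [mul_assoc] using hf.2 (g * y) h⟩

end MemInducedOmega

theorem QuotientGroup.smul_mk_one_eq_mk_one_iff {α : Type*} [Group α] {s : Subgroup α} (a : α) :
    a • (QuotientGroup.mk 1 : α ⧸ s) = QuotientGroup.mk 1 ↔ a ∈ s := by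
  rw [MulAction.Quotient.smul_mk, smul_eq_mul, mul_one, QuotientGroup.eq, mul_one, inv_mem_iff]

theorem Representation.coeff_ofMulAction_ofCoeff {k G X : Type*} [Semiring k] [Monoid G]
    [MulAction G X] (g : G) (v : X →₀ k) :
    (ofMulAction k G X g (MonoidAlgebra.ofCoeff v)).coeff = v.mapDomain (g • ·) :=
  rfl

section InducedOmega

variable {G : Type*} [Group G] (H H₁ : Subgroup G)

open scoped Classical in
/-- The element `1 ⊗ v` of `Ind_H^G`, in the function model of `MemInducedOmega`. -/
noncomputable def oneTmul (v : (H ⧸ H₁.subgroupOf H) →₀ ℚ) :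
    G → ((H ⧸ H₁.subgroupOf H) →₀ ℚ) := fun x =>
  if hx : x ∈ H then v.mapDomain ((⟨x, hx⟩ : H)⁻¹ • ·) else 0

variable {H H₁}

theorem oneTmul_one (v : (H ⧸ H₁.subgroupOf H) →₀ ℚ) : oneTmul H H₁ v 1 = v := by
  rw [oneTmul, dif_pos H.one_mem]
  change Finsupp.mapDomain ((1 : H)⁻¹ • ·) v = v
  simp only [inv_one, one_smul]
  exact Finsupp.mapDomain_id

theorem memInducedOmega_oneTmul {v : (H ⧸ H₁.subgroupOf H) →₀ ℚ}
    (hv : Finsupp.linearCombination ℚ (fun _ => (1 : ℚ)) v = 0) :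
    MemInducedOmega H H₁ (oneTmul H H₁ v) := by
  refine ⟨fun x => ?_, fun x h => ?_⟩
  · unfold oneTmul
    split_ifs
    · rw [Finsupp.linearCombination_mapDomain]
      exact hv
    · simp
  · by_cases hx : x ∈ H
    · have hxh : x * h ∈ H := mul_mem hx h.2
      simp only [oneTmul, dif_pos hx, dif_pos hxh, Representation.coeff_ofMulAction_ofCoeff]
      rw [← Finsupp.mapDomain_comp]
      congr
      funext q
      change ((⟨x, hx⟩ * h)⁻¹ : H) • q = _
      rw [mul_inv_rev, mul_smul]
      rfl
    · have hxh : x * h ∉ H := fun hc => hx (by simpa using mul_mem hc (inv_mem h.2))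
      simp [oneTmul, hx, hxh]

theorem exists_mem_mapDomain_smul_eq_of_mem_translationKernel
    {v : (H ⧸ H₁.subgroupOf H) →₀ ℚ} (hv0 : v ≠ 0)
    (hv : Finsupp.linearCombination ℚ (fun _ => (1 : ℚ)) v = 0) {x : G}
    (hx : x ∈ translationKernel {f | MemInducedOmega H H₁ f}) :
    ∃ hxH : x ∈ H, v.mapDomain ((⟨x, hxH⟩ : H) • ·) = v := by
  have h := apply_inv_eq_apply_one_of_mem_translationKernel hx (memInducedOmega_oneTmul hv)
  rw [oneTmul_one] at h
  by_cases hxH : x⁻¹ ∈ H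
  · have hxH' : x ∈ H := by simpa using inv_mem hxH
    have hinv : (⟨x⁻¹, hxH⟩ : H)⁻¹ = ⟨x, hxH'⟩ := Subtype.ext (inv_inv x)
    simp only [oneTmul, dif_pos hxH, hinv] at h
    exact ⟨hxH', h⟩
  · simp only [oneTmul, dif_neg hxH] at h
    exact absurd h.symm hv0

theorem translationKernel_memInducedOmega_le (h₁ : H₁ < H) :
    translationKernel {f | MemInducedOmega H H₁ f} ≤ H₁ := by
  obtain ⟨a, haH, haH₁⟩ := SetLike.exists_of_lt h₁
  set q₀ : H ⧸ H₁.subgroupOf H := QuotientGroup.mk 1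
  have hq : q₀ ≠ (⟨a, haH⟩ : H) • q₀ := fun h =>
    haH₁ ((QuotientGroup.smul_mk_one_eq_mk_one_iff (⟨a, haH⟩ : H)).mp h.symm)
  intro x hx
  obtain ⟨hxH, hfix⟩ := exists_mem_mapDomain_smul_eq_of_mem_translationKernel
    (v := Finsupp.single q₀ 1 - Finsupp.single ((⟨a, haH⟩ : H) • q₀) 1)
    (sub_ne_zero.mpr ((Finsupp.single_left_inj one_ne_zero).not.mpr hq))
    (by simp [Finsupp.linearCombination_single]) hx
  rw [Finsupp.mapDomain_sub, Finsupp.mapDomain_single, Finsupp.mapDomain_single] at hfix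
  exact (QuotientGroup.smul_mk_one_eq_mk_one_iff (⟨x, hxH⟩ : H)).mp
    (Finsupp.eq_of_single_sub_single_eq hq hfix)

end InducedOmega

theorem induced_kernel_in_core_general {G : Type*} [Group G]
    (H H₁ : Subgroup G) (h₁ : H₁ < H) :
    (∃ S : Subgroup G, S.Normal ∧ S ≤ H₁ ∧
      (S : Set G) = {x : G | ∀ f : G → ((H ⧸ H₁.subgroupOf H) →₀ ℚ),
        MemInducedOmega H H₁ f → (fun y => f (x⁻¹ * y)) = f})
    ∧ (H₁.normalCore = ⊥ →
        ∀ x : G, (∀ f : G → ((H ⧸ H₁.subgroupOf H) →₀ ℚ),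
          MemInducedOmega H H₁ f → (fun y => f (x⁻¹ * y)) = f) → x = 1) := by
  have hnormal : (translationKernel {f | MemInducedOmega H H₁ f}).Normal :=
    translationKernel_normal fun g _ hf => hf.comp_mul_left g
  have hle := translationKernel_memInducedOmega_le h₁
  refine ⟨⟨_, hnormal, hle, rfl⟩, fun hcore x hx => ?_⟩
  have hx_core : x ∈ H₁.normalCore := Subgroup.normal_le_normalCore.mpr hle hx
  rwa [hcore, Subgroup.mem_bot] at hx_core

/-- Let `G` be a finite group and `H₁ ≤ H ≤ G` subgroups with `H₁` a
proper subgroup of `H`.  Then the kernel of the `G`-action on the induced module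
`Ind_H^G ω(H/H₁)_ℚ` (realized by its function model `MemInducedOmega` inside
`G → ℚ[H/H₁]`, with `G` acting by `(g • f) x = f (g⁻¹ x)`) is a normal subgroup of `G`
contained in `H₁`.  In particular, if `H₁` contains no nontrivial normal subgroup of `G`
(its normal core is trivial), then `G` acts faithfully on `Ind_H^G ω(H/H₁)_ℚ`. -/
theorem induced_kernel_in_core {G : Type*} [Group G] [Finite G]
    (H H₁ : Subgroup G) (h₁ : H₁ < H) :
    (∃ S : Subgroup G, S.Normal ∧ S ≤ H₁ ∧
      (S : Set G) = {x : G | ∀ f : G → ((H ⧸ H₁.subgroupOf H) →₀ ℚ),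
        MemInducedOmega H H₁ f → (fun y => f (x⁻¹ * y)) = f})
    ∧ (H₁.normalCore = ⊥ →
        ∀ x : G, (∀ f : G → ((H ⧸ H₁.subgroupOf H) →₀ ℚ),
          MemInducedOmega H H₁ f → (fun y => f (x⁻¹ * y)) = f) → x = 1) :=
  induced_kernel_in_core_general H H₁ h₁
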